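/- arXiv:1201.5933 — 7 statements merged into one kernel-verified Lean document; each statement's English description precedes it below -/
import Mathlib

section
/- For natural numbers m, n with 2m ≤ n, the (m+1)×(m+1) rational matrix M with entries M_{i,j} = 1/(n-i-j)! for 0 ≤ i,j ≤ m is invertible. -/
/-!
Since `(a - j)! * a.descFactorial j = a!`, the entry `1/(a - j)!` equals `(1/a!) * p_j(a)` with
`p_j = X (X - 1) ⋯ (X - j + 1)` the descending Pochhammer polynomial. Scaling the rows by `a!`
leaves the matrix `(p_j(a_i))`, which has the Vandermonde determinant of the `a_i` because the
`p_j` are monic of degree `j`. With `a_i = n - i` the nodes are distinct, and `2m ≤ n` gives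
`j ≤ n - i`, so the first identity applies to every entry.
-/

open Polynomial

theorem Matrix.det_of_descPochhammer_eval_ne_zero {R : Type*} [CommRing R] [IsDomain R] {k : ℕ}
    {x : Fin k → R} (hx : Function.Injective x) :
    (Matrix.of fun i j : Fin k => (descPochhammer R j).eval (x i)).det ≠ 0 := by
  rw [← det_eval_matrixOfPolynomials_eq_det_vandermonde x _
    (fun j => descPochhammer_natDegree R j) (fun j => monic_descPochhammer R j)]
  exact det_vandermonde_ne_zero_iff.mpr hx

theorem one_div_factorial_sub_eq {K : Type*} [Field K] [CharZero K] {a j : ℕ} (h : j ≤ a) :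
    (1 : K) / (a - j).factorial = 1 / a.factorial * (descPochhammer K j).eval (a : K) := by
  rw [descPochhammer_eval_eq_descFactorial, ← Nat.factorial_mul_descFactorial h]
  have hfac : ((a - j).factorial : K) ≠ 0 := Nat.cast_ne_zero.mpr (Nat.factorial_ne_zero _)
  have hdesc : (a.descFactorial j : K) ≠ 0 := by
    exact_mod_cast (Nat.descFactorial_pos.mpr h).ne'
  push_cast
  field_simp

theorem Matrix.isUnit_of_one_div_factorial_sub {K : Type*} [Field K] [CharZero K] {k : ℕ}
    {a : Fin k → ℕ} (ha : Function.Injective a) (hle : ∀ i j : Fin k, (j : ℕ) ≤ a i) :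
    IsUnit (Matrix.of fun i j : Fin k => (1 : K) / (a i - j).factorial) := by
  have hfactor : (Matrix.of fun i j : Fin k => (1 : K) / (a i - j).factorial) =
      Matrix.of fun i j => 1 / (a i).factorial *
        (Matrix.of fun i j : Fin k => (descPochhammer K j).eval (a i : K)) i j := by
    ext i j
    exact one_div_factorial_sub_eq (hle i j)
  rw [isUnit_iff_isUnit_det, hfactor, det_mul_column, isUnit_iff_ne_zero]
  refine mul_ne_zero (Finset.prod_ne_zero_iff.mpr fun i _ =>
    one_div_ne_zero (Nat.cast_ne_zero.mpr (Nat.factorial_ne_zero _))) ?_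
  exact det_of_descPochhammer_eval_ne_zero (Nat.cast_injective.comp ha)

/-- For `2m ≤ n`, the `(m+1) × (m+1)` rational matrix with entries
`1/(n-i-j)!` is invertible. -/
theorem factorial_hankel_matrix_invertible (m n : ℕ) (h : 2 * m ≤ n) :
    IsUnit (Matrix.of fun i j : Fin (m + 1) =>
      (1 : ℚ) / ((n - (i : ℕ) - (j : ℕ)).factorial : ℚ)) := by
  refine Matrix.isUnit_of_one_div_factorial_sub (a := fun i => n - i) ?_ ?_
  · intro i j hij
    have := i.is_le
    have := j.is_le
    exact Fin.ext (by simp only at hij; omega)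
  · intro i j
    have := i.is_le
    have := j.is_le
    omega
end

section
/- For any natural number m ≥ 1, let A be the m×m rational matrix with entries A_{i,j} = 1/(2m-i-j)! for 0 ≤ i,j ≤ m-1, and let v be the column vector (1/m!, 1/(m-1)!, …, 1/1!)^T in ℚ^m. Then A is invertible and v^T A^{-1} v = 1 - (-1)^m. -/
/-!
Reversing both indices turns `A` into the Hankel matrix `H i j = 1 / ((i + 1) + (j + 1))!` and
`v` into `(1 / (i + 1)!)ᵢ`. Since `(e + k)! / (c + k)!` is a monic polynomial of degree `e - c`
in `k`, the `n`-th finite difference gives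
`∑_{k ≤ n} (-1)^k C(n, k) (e + k)! / (c + k)! = if e - c = n then (-1)^n n! else 0`
for `c ≤ e ≤ c + n`. By this identity, `E i k = (-1)^k C(i, k) (i + 1 + k)!` makes `E * H` upper
triangular; its diagonal entries
`∑_k (-1)^k C(i, k) / (i + 2 + k) = i! / ∏_{j ≤ i} (i + 2 + j)` are, up to sign,
`i`-th finite differences of `t ↦ t⁻¹`, hence nonzero, so `H` is invertible. The same identity
shows that `x j = (-1)^j C(m, j + 1) (m + j + 1)! / m!` solves `H x = v` and that
`v ⬝ᵥ x = 1 - (-1)^m`.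
-/

open Finset Nat Polynomial Matrix fwdDiff

section CommRing

variable {R : Type*} [CommRing R]

theorem sum_range_alternating_choose_mul_eq_fwdDiff_iter (f : R → R) (n : ℕ) (x : R) :
    ∑ k ∈ range (n + 1), (-1) ^ k * n.choose k * f (x + k) = (-1) ^ n * (Δ_[1])^[n] f x := by
  rw [fwdDiff_iter_eq_sum_shift, mul_sum]
  refine sum_congr rfl fun k hk => ?_
  obtain ⟨j, rfl⟩ : ∃ j, n = k + j := ⟨n - k, by have := mem_range.1 hk; omega⟩
  have hsq : ((-1 : R) ^ j) * (-1) ^ j = 1 := by rw [← mul_pow]; simp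
  simp only [add_tsub_cancel_left, nsmul_eq_mul, mul_one, zsmul_eq_mul, Int.cast_mul,
    Int.cast_pow, Int.cast_neg, Int.cast_one, Int.cast_natCast, pow_add]
  linear_combination (-(-1) ^ k * ((k + j).choose k : R) * f (x + k)) * hsq

theorem sum_range_alternating_choose_mul_eval {n : ℕ} (P : R[X]) (hP : P.natDegree ≤ n)
    (x : R) :
    ∑ k ∈ range (n + 1), (-1) ^ k * n.choose k * P.eval (x + k) =
      (-1) ^ n * n ! * P.coeff n := by
  rw [sum_range_alternating_choose_mul_eq_fwdDiff_iter P.eval, mul_assoc]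
  congr 1
  rcases hP.lt_or_eq with hlt | rfl
  · simp [fwdDiff_iter_eq_zero_of_degree_lt hlt, coeff_eq_zero_of_natDegree_lt hlt]
  · rw [fwdDiff_iter_degree_eq_factorial, coeff_natDegree, Pi.smul_apply, smul_eq_mul, mul_comm]
    rfl

end CommRing

section Field

variable {K : Type*} [Field K]

theorem fwdDiff_iter_inv (n : ℕ) {x : K} (hx : ∀ j : ℕ, x + j ≠ 0) :
    (Δ_[1])^[n] (fun t : K => t⁻¹) x = (-1) ^ n * n ! / ∏ j ∈ range (n + 1), (x + j) := by
  induction n generalizing x with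
  | zero => simp
  | succ n ih =>
    have hx1 (j : ℕ) : x + 1 + j ≠ 0 := by convert hx (j + 1) using 1; push_cast; ring
    have hP : ∏ j ∈ range n, (x + 1 + j) ≠ 0 := prod_ne_zero_iff.2 fun j _ => hx1 j
    have h0 : x ≠ 0 := by simpa using hx 0
    have hn := hx1 n
    have hshift (N : ℕ) :
        ∏ j ∈ range (N + 1), (x + j) = (∏ j ∈ range N, (x + 1 + j)) * x := by
      rw [prod_range_succ']; push_cast; simp only [add_assoc, add_comm (1 : K), add_zero]
    rw [Function.iterate_succ_apply', fwdDiff, ih hx1, ih hx, hshift, hshift, prod_range_succ,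
      Nat.factorial_succ]
    field_simp
    push_cast
    ring

theorem sum_range_alternating_choose_mul_inv (n : ℕ) {x : K} (hx : ∀ j : ℕ, x + j ≠ 0) :
    ∑ k ∈ range (n + 1), (-1) ^ k * n.choose k * (x + k)⁻¹ =
      n ! / ∏ j ∈ range (n + 1), (x + j) := by
  rw [sum_range_alternating_choose_mul_eq_fwdDiff_iter (fun t => t⁻¹), fwdDiff_iter_inv n hx,
    ← mul_div_assoc, ← mul_assoc, ← mul_pow]
  simp

variable [CharZero K]

theorem factorial_add_div_factorial (c d : ℕ) :
    ((c + d)! / c ! : K) = (ascPochhammer K d).eval ((c : K) + 1) := by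
  rw [← factorial_mul_ascFactorial, Nat.cast_mul,
    mul_div_cancel_left₀ _ (Nat.cast_ne_zero.2 c.factorial_ne_zero), ← Nat.cast_succ,
    ascPochhammer_nat_eq_natCast_ascFactorial]

theorem sum_range_alternating_choose_mul_factorial_div_factorial {n c e : ℕ} (hce : c ≤ e)
    (hn : e - c ≤ n) :
    ∑ k ∈ range (n + 1), (-1) ^ k * n.choose k * ((e + k)! / (c + k)! : K) =
      if e - c = n then ((-1) ^ n * n ! : K) else 0 := by
  have hterm (k : ℕ) :
      ((e + k)! / (c + k)! : K) = (ascPochhammer K (e - c)).eval ((c + 1 : K) + k) := by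
    rw [show e + k = c + k + (e - c) by omega, factorial_add_div_factorial]
    push_cast
    ring_nf
  simp only [hterm]
  rw [sum_range_alternating_choose_mul_eval _ (by rw [ascPochhammer_natDegree]; exact hn)]
  split_ifs with h
  · have hlead := (monic_ascPochhammer K (e - c)).coeff_natDegree
    rw [ascPochhammer_natDegree] at hlead
    rw [← h, hlead, mul_one]
  · rw [coeff_eq_zero_of_natDegree_lt (by rw [ascPochhammer_natDegree]; omega), mul_zero]

end Field

section InvFactorialHankel

variable (K : Type*) [Field K] (m : ℕ)

def invFactorialHankel : Matrix (Fin m) (Fin m) K :=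
  of fun i j => (((i : ℕ) + 1 + (j + 1))! : K)⁻¹

def invFactorialHankelElim : Matrix (Fin m) (Fin m) K :=
  of fun i k => (-1) ^ (k : ℕ) * (i : ℕ).choose k * (((i : ℕ) + 1 + k)! : K)

def invFactorialVec : Fin m → K := fun j => (((j : ℕ) + 1)! : K)⁻¹

def invFactorialHankelSol : Fin m → K :=
  fun j => (-1) ^ (j : ℕ) * m.choose (j + 1) * ((m + (j + 1))! / m ! : K)

theorem invFactorialHankelElim_mul_apply (i j : Fin m) :
    (invFactorialHankelElim K m * invFactorialHankel K m) i j =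
      ∑ k ∈ range (i + 1),
        (-1) ^ k * (i : ℕ).choose k * (((i : ℕ) + 1 + k)! / ((j : ℕ) + 2 + k)! : K) := by
  set f : ℕ → K := fun k =>
    (-1) ^ k * (i : ℕ).choose k * (((i : ℕ) + 1 + k)! / ((j : ℕ) + 2 + k)! : K)
  rw [mul_apply]
  calc _ = ∑ k : Fin m, f k := by
        refine Fintype.sum_congr _ _ fun k => ?_
        simp only [invFactorialHankelElim, invFactorialHankel, of_apply, f]
        rw [show (k : ℕ) + 1 + ((j : ℕ) + 1) = j + 2 + k by omega, div_eq_mul_inv, mul_assoc]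
    _ = ∑ k ∈ range m, f k := Fin.sum_univ_eq_sum_range f m
    _ = ∑ k ∈ range (i + 1), f k := by
        refine (sum_subset (range_subset_range.2 i.isLt) fun k _ hk => ?_).symm
        simp [f, choose_eq_zero_of_lt (not_lt.1 (mt mem_range.2 hk))]

variable [CharZero K]

theorem invFactorialHankelElim_mul_isUpperTriangular :
    (invFactorialHankelElim K m * invFactorialHankel K m).IsUpperTriangular := by
  intro i j (hji : j < i)
  rw [invFactorialHankelElim_mul_apply,
    sum_range_alternating_choose_mul_factorial_div_factorial (by omega) (by omega),
    if_neg (by omega)]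

theorem invFactorialHankelElim_mul_apply_self_ne_zero (i : Fin m) :
    (invFactorialHankelElim K m * invFactorialHankel K m) i i ≠ 0 := by
  have hx (j : ℕ) : ((i : ℕ) + 2 : K) + j ≠ 0 := by
    exact_mod_cast (by omega : (i : ℕ) + 2 + j ≠ 0)
  have hterm (k : ℕ) :
      (((i : ℕ) + 1 + k)! / ((i : ℕ) + 2 + k)! : K) = (((i : ℕ) + 2 : K) + k)⁻¹ := by
    rw [show (i : ℕ) + 2 + k = (i + 1 + k) + 1 by omega, factorial_succ, Nat.cast_mul,
      div_mul_cancel_right₀ (Nat.cast_ne_zero.2 (factorial_ne_zero _))]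
    push_cast
    ring_nf
  rw [invFactorialHankelElim_mul_apply]
  simp only [hterm]
  rw [sum_range_alternating_choose_mul_inv _ hx]
  exact div_ne_zero (Nat.cast_ne_zero.2 (factorial_ne_zero _))
    (prod_ne_zero_iff.2 fun j _ => hx j)

theorem det_invFactorialHankel_ne_zero : (invFactorialHankel K m).det ≠ 0 := by
  have h := det_of_isUpperTriangular (invFactorialHankelElim_mul_isUpperTriangular K m)
  rw [det_mul] at h
  exact right_ne_zero_of_mul
    (h ▸ prod_ne_zero_iff.2 fun i _ => invFactorialHankelElim_mul_apply_self_ne_zero K m i)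

theorem sum_inv_factorial_mul_invFactorialHankelSol {c : ℕ} (hc : c ≤ m) :
    ∑ j : Fin m, ((c + ((j : ℕ) + 1))! : K)⁻¹ * invFactorialHankelSol K m j =
      (c ! : K)⁻¹ - if c = 0 then (-1) ^ m else 0 := by
  have h := sum_range_alternating_choose_mul_factorial_div_factorial (K := K) (n := m) hc
    (by omega)
  simp only [sum_range_succ', show m - c = m ↔ c = 0 by omega, pow_zero, choose_zero_right,
    add_zero, Nat.cast_one, one_mul] at h
  simp only [invFactorialHankelSol]
  rw [Fin.sum_univ_eq_sum_range (fun j => ((c + (j + 1))! : K)⁻¹ *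
      ((-1) ^ j * m.choose (j + 1) * ((m + (j + 1))! / m ! : K))) m]
  have hm : (m ! : K) ≠ 0 := Nat.cast_ne_zero.2 (factorial_ne_zero m)
  have hc : (c ! : K) ≠ 0 := Nat.cast_ne_zero.2 (factorial_ne_zero c)
  rw [show ∑ j ∈ range m, ((c + (j + 1))! : K)⁻¹ *
      ((-1) ^ j * m.choose (j + 1) * ((m + (j + 1))! / m ! : K)) =
      -(m ! : K)⁻¹ * ∑ j ∈ range m, (-1) ^ (j + 1) * m.choose (j + 1) *
        ((m + (j + 1))! / (c + (j + 1))! : K) by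
    rw [mul_sum]; exact sum_congr rfl fun j _ => by ring]
  generalize ∑ j ∈ range m, (-1) ^ (j + 1) * (m.choose (j + 1) : K) *
    ((m + (j + 1))! / (c + (j + 1))! : K) = S at h ⊢
  split_ifs at h ⊢ <;> field_simp at h ⊢ <;> linear_combination -h

theorem invFactorialHankel_mulVec_sol :
    invFactorialHankel K m *ᵥ invFactorialHankelSol K m = invFactorialVec K m := by
  funext i
  rw [mulVec, dotProduct]
  simp only [invFactorialHankel, of_apply]
  rw [sum_inv_factorial_mul_invFactorialHankelSol K m (by omega), if_neg (by omega), sub_zero]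
  rfl

theorem invFactorialVec_dotProduct_sol :
    invFactorialVec K m ⬝ᵥ invFactorialHankelSol K m = 1 - (-1) ^ m := by
  have h := sum_inv_factorial_mul_invFactorialHankelSol K m (Nat.zero_le m)
  simp only [zero_add, factorial_zero, Nat.cast_one, inv_one, if_true] at h
  exact h

end InvFactorialHankel

theorem hankel_inverse_quadratic_form_general (m : ℕ)
    (A : Matrix (Fin m) (Fin m) ℚ)
    (hA : ∀ i j : Fin m, A i j = 1 / ((2 * m - (i : ℕ) - (j : ℕ)).factorial : ℚ))
    (v : Fin m → ℚ)
    (hv : ∀ k : Fin m, v k = 1 / ((m - (k : ℕ)).factorial : ℚ)) :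
    IsUnit A ∧ dotProduct v (A⁻¹.mulVec v) = 1 - (-1 : ℚ) ^ m := by
  have hA' : A = (invFactorialHankel ℚ m).submatrix Fin.revPerm Fin.revPerm := by
    ext i j
    rw [hA, submatrix_apply, invFactorialHankel, of_apply, Fin.revPerm_apply, Fin.revPerm_apply,
      Fin.val_rev, Fin.val_rev, one_div]
    congr 3
    omega
  have hv' : v = invFactorialVec ℚ m ∘ Fin.revPerm := by
    funext k
    rw [hv, Function.comp_apply, invFactorialVec, Fin.revPerm_apply, Fin.val_rev, one_div]
    congr 3
    omega
  have hdet : IsUnit A.det := by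
    rw [hA', det_submatrix_equiv_self]
    exact (det_invFactorialHankel_ne_zero ℚ m).isUnit
  have hsol : A *ᵥ (invFactorialHankelSol ℚ m ∘ Fin.revPerm) = v := by
    rw [hA', hv', submatrix_mulVec_equiv, Function.comp_assoc, Equiv.self_comp_symm,
      Function.comp_id, invFactorialHankel_mulVec_sol]
  have hinv : A⁻¹ *ᵥ v = invFactorialHankelSol ℚ m ∘ Fin.revPerm := by
    rw [← hsol, mulVec_mulVec, nonsing_inv_mul A hdet, one_mulVec]
  refine ⟨(isUnit_iff_isUnit_det A).2 hdet, ?_⟩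
  rw [hinv, hv', comp_equiv_dotProduct_comp_equiv, invFactorialVec_dotProduct_sol]

/-- For `m ≥ 1`, the matrix `A` with `A_{i,j} = 1/(2m-i-j)!` (for `0 ≤ i,j ≤ m-1`)
is invertible and, with `v_k = 1/(m-k)!`, one has `vᵀ A⁻¹ v = 1 - (-1)^m`. -/
theorem hankel_inverse_quadratic_form (m : ℕ) (hm : 1 ≤ m)
    (A : Matrix (Fin m) (Fin m) ℚ)
    (hA : ∀ i j : Fin m, A i j = 1 / ((2 * m - (i : ℕ) - (j : ℕ)).factorial : ℚ))
    (v : Fin m → ℚ)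
    (hv : ∀ k : Fin m, v k = 1 / ((m - (k : ℕ)).factorial : ℚ)) :
    IsUnit A ∧ dotProduct v (A⁻¹.mulVec v) = 1 - (-1 : ℚ) ^ m :=
  hankel_inverse_quadratic_form_general m A hA v hv
end

section
/- For any natural number m ≥ 1 and any i with 1 ≤ i ≤ m, the sum ∑_{j=1}^{m+1} (-1)^{m+j} (2m-j+1)! / ((2m-i-j+2)! (j-1)! (m-j+1)!) equals 0. -/
/-!
Writing `r = i - 1` and `k = j - 1`, the summand is `(-1)^(m+1) r!/m!` times
`(-1)^k C(m,k) C(2m-k, r)`, so up to a constant the sum is the `m`-th forward difference of the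
degree-`r` polynomial `x ↦ C(x, r)`, evaluated at `x = m`. As `r < m`, it vanishes.
-/

open Finset Nat fwdDiff

theorem fwdDiff_iter_choose_eq_zero_of_lt {r n : ℕ} (h : r < n) :
    (Δ_[1])^[n] (fun x ↦ (x.choose r : ℤ)) = 0 := by
  obtain ⟨k, rfl⟩ := Nat.exists_eq_add_of_lt h
  have hr : (Δ_[1])^[r] (fun x ↦ (x.choose r : ℤ)) = fun _ ↦ 1 := by
    simpa using fwdDiff_iter_choose 0 r
  ext y
  rw [show r + k + 1 = k + 1 + r by ring, Function.iterate_add_apply, hr,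
    Function.iterate_succ_apply, fwdDiff_const]
  simp [fwdDiff_iter_eq_sum_shift]

theorem sum_range_alternating_choose_mul_choose_add_sub {r m : ℕ} (h : r < m) (n : ℕ) :
    ∑ k ∈ range (m + 1), (-1 : ℤ) ^ k * m.choose k * (n + m - k).choose r = 0 := by
  have hdiff := congr_fun (fwdDiff_iter_choose_eq_zero_of_lt h) n
  rw [fwdDiff_iter_eq_sum_shift, ← sum_range_reflect, Pi.zero_apply] at hdiff
  rw [← hdiff]
  refine sum_congr rfl fun k hk ↦ ?_
  have hk : k ≤ m := Nat.lt_succ_iff.mp (mem_range.mp hk)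
  rw [Nat.add_sub_cancel, Nat.sub_sub_self hk, choose_symm hk, smul_eq_mul, smul_eq_mul,
    mul_one, Nat.add_sub_assoc hk]

theorem cast_factorial_div_eq_choose_mul_choose {a r m k : ℕ} (hr : r ≤ a) (hk : k ≤ m) :
    (a ! : ℚ) / ((a - r)! * k ! * (m - k)!) = r ! / m ! * (m.choose k * a.choose r) := by
  rw [cast_choose ℚ hk, cast_choose ℚ hr]
  field_simp

theorem factorial_alternating_sum_zero_general (m i : ℕ) (hi1 : 1 ≤ i) (hi2 : i ≤ m) :
    ∑ j ∈ Finset.Icc 1 (m + 1),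
      ((-1 : ℚ) ^ (m + j) * ((2 * m + 1 - j).factorial : ℚ) /
        (((2 * m + 2 - i - j).factorial : ℚ) * ((j - 1).factorial : ℚ) *
          ((m + 1 - j).factorial : ℚ)))
      = 0 := by
  obtain ⟨r, rfl⟩ : ∃ r, i = r + 1 := ⟨i - 1, by omega⟩
  rw [← Ico_add_one_right_eq_Icc, sum_Ico_eq_sum_range, Nat.add_sub_cancel]
  calc _ = ∑ k ∈ range (m + 1), (-1 : ℚ) ^ (m + 1) * (r ! / m !) *
          ((-1) ^ k * m.choose k * (m + m - k).choose r) := by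
        refine sum_congr rfl fun k hk ↦ ?_
        have hk : k ≤ m := Nat.lt_succ_iff.mp (mem_range.mp hk)
        rw [show 2 * m + 1 - (1 + k) = m + m - k by omega,
          show 2 * m + 2 - (r + 1) - (1 + k) = m + m - k - r by omega,
          show 1 + k - 1 = k by omega, show m + 1 - (1 + k) = m - k by omega, mul_div_assoc,
          cast_factorial_div_eq_choose_mul_choose (by omega) hk]
        ring
    _ = (-1 : ℚ) ^ (m + 1) * (r ! / m !) *
          ((∑ k ∈ range (m + 1), (-1 : ℤ) ^ k * m.choose k * (m + m - k).choose r : ℤ) : ℚ) := by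
        push_cast
        rw [mul_sum]
    _ = 0 := by
        rw [sum_range_alternating_choose_mul_choose_add_sub (by omega), Int.cast_zero, mul_zero]

/-- For `m ≥ 1` and `1 ≤ i ≤ m`,
`∑_{j=1}^{m+1} (-1)^{m+j} (2m-j+1)! / ((2m-i-j+2)! (j-1)! (m-j+1)!) = 0`. -/
theorem factorial_alternating_sum_zero (m i : ℕ) (hm : 1 ≤ m) (hi1 : 1 ≤ i) (hi2 : i ≤ m) :
    ∑ j ∈ Finset.Icc 1 (m + 1),
      ((-1 : ℚ) ^ (m + j) * ((2 * m + 1 - j).factorial : ℚ) /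
        (((2 * m + 2 - i - j).factorial : ℚ) * ((j - 1).factorial : ℚ) *
          ((m + 1 - j).factorial : ℚ)))
      = 0 :=
  factorial_alternating_sum_zero_general m i hi1 hi2
end

section
/- For any natural number m ≥ 1, ∑_{j=1}^{m} (-1)^{m+j} (2m-j+1)! / ((j-1)! ((m-j+1)!)^2) = 1 - (-1)^m, as rational numbers. -/
/-!
After the shift `k = j - 1` the summand becomes `-(-1)^m (-1)^k C(m,k) C(2m-k,m)`, since
`(2m-k)! / (k! ((m-k)!)^2) = C(m,k) C(2m-k,m)`. Expanding `X^n (X+1)^d = ((X+1) - 1)^n (X+1)^d`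
binomially and comparing coefficients of `X^(n+s)` gives
`∑_{k ≤ n} (-1)^k C(n,k) C(n+d-k, n+s) = C(d,s)`; for `d = n`, `s = 0` the full sum is `1`,
and the sum in the theorem is this one without its last term `(-1)^m`.
-/
open Polynomial Finset
open scoped Nat

theorem Int.alternating_sum_choose_mul_choose (n d s : ℕ) :
    ∑ k ∈ Finset.range (n + 1), (-1 : ℤ) ^ k * n.choose k * (n + d - k).choose (n + s) =
      d.choose s := by
  have hexpand : (X : ℤ[X]) ^ n * (X + 1) ^ d =
      ∑ k ∈ Finset.range (n + 1), C ((-1 : ℤ) ^ k * n.choose k) * (X + 1) ^ (n + d - k) := by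
    rw [show (X : ℤ[X]) = -1 + (X + 1) by ring, add_pow, sum_mul]
    refine sum_congr rfl fun k hk => ?_
    rw [show n + d - k = n - k + d by grind]
    simp only [C_mul, C_pow, C_neg, C_1, map_natCast, pow_add]
    ring
  have hcoeff := congrArg (coeff · (n + s)) hexpand
  simp only [coeff_X_pow_mul', finsetSum_coeff, coeff_C_mul, coeff_X_add_one_pow] at hcoeff
  simpa [eq_comm] using hcoeff

theorem Int.alternating_sum_range_choose_mul_choose_two_mul_sub (n : ℕ) :
    ∑ k ∈ Finset.range n, (-1 : ℤ) ^ k * n.choose k * (2 * n - k).choose n = 1 - (-1) ^ n := by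
  have h := Int.alternating_sum_choose_mul_choose n n 0
  rw [sum_range_succ] at h
  simp only [two_mul, add_zero, Nat.choose_self, Nat.choose_zero_right, Nat.add_sub_cancel] at h ⊢
  linear_combination h

theorem Nat.cast_factorial_div_eq_choose_mul_choose {K : Type*} [Field K] [CharZero K]
    {n k : ℕ} (hk : k ≤ n) :
    ((2 * n - k)! : K) / (k ! * (n - k)! ^ 2) = n.choose k * (2 * n - k).choose n := by
  rw [Nat.cast_choose K hk, Nat.cast_choose K (by omega : n ≤ 2 * n - k),
    show 2 * n - k - n = n - k by omega]
  have hn : (n ! : K) ≠ 0 := Nat.cast_ne_zero.2 n.factorial_ne_zero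
  field_simp

theorem factorial_alternating_sum_eq_general (m : ℕ) :
    ∑ j ∈ Finset.Icc 1 m,
      ((-1 : ℚ) ^ (m + j) * ((2 * m + 1 - j).factorial : ℚ) /
        (((j - 1).factorial : ℚ) * ((m + 1 - j).factorial : ℚ) ^ 2))
      = 1 - (-1 : ℚ) ^ m := by
  rw [← Finset.Ico_add_one_right_eq_Icc, sum_Ico_eq_sum_range, Nat.add_sub_cancel]
  have hterm : ∀ k ∈ Finset.range m,
      (-1 : ℚ) ^ (m + (1 + k)) * ((2 * m + 1 - (1 + k))! : ℚ) /
        (((1 + k - 1)! : ℚ) * ((m + 1 - (1 + k))! : ℚ) ^ 2) =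
      -(-1) ^ m * ((-1 : ℚ) ^ k * m.choose k * (2 * m - k).choose m) := by
    intro k hk
    rw [show 2 * m + 1 - (1 + k) = 2 * m - k by omega, show 1 + k - 1 = k by omega,
      show m + 1 - (1 + k) = m - k by omega, mul_div_assoc,
      Nat.cast_factorial_div_eq_choose_mul_choose (mem_range.1 hk).le]
    ring
  rw [sum_congr rfl hterm, ← mul_sum]
  have hsum := congrArg (Int.cast : ℤ → ℚ) (Int.alternating_sum_range_choose_mul_choose_two_mul_sub m)
  push_cast at hsum
  rw [hsum]
  have hsq : (-1 : ℚ) ^ m * (-1) ^ m = 1 := by rw [← mul_pow, neg_one_mul, neg_neg, one_pow]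
  linear_combination hsq

/-- For `m ≥ 1`, `∑_{j=1}^{m} (-1)^{m+j} (2m-j+1)!/((j-1)!((m-j+1)!)^2) = 1 - (-1)^m`. -/
theorem factorial_alternating_sum_eq (m : ℕ) (hm : 1 ≤ m) :
    ∑ j ∈ Finset.Icc 1 m,
      ((-1 : ℚ) ^ (m + j) * ((2 * m + 1 - j).factorial : ℚ) /
        (((j - 1).factorial : ℚ) * ((m + 1 - j).factorial : ℚ) ^ 2))
      = 1 - (-1 : ℚ) ^ m :=
  factorial_alternating_sum_eq_general m
end

section
/- Let k = ℂ and n = 2m with the basic G_a-action (t*z)_k = ∑_{i=0}^{k} t^{k-i}/(k-i)! z_i on ℂ^{n+1}. Suppose a = (0,…,0, a_m, a_{m+1},…, a_{2m}) has its first m coordinates zero, and b = (0,…,0, (-1)^m a_m, b_{m+1},…, b_{2m}) has its first m coordinates zero and its m-th coordinate equal to (-1)^m a_m. Then (a,b) lies in the Zariski closure of the graph Γ = {(x, t*x) : x ∈ ℂ^{n+1}, t ∈ ℂ}. -/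
/-- The basic `G_a`-action on `k^{n+1}`. -/
def gaAct (k : Type*) [Field k] (n : ℕ) (t : k) (z : Fin (n + 1) → k) :
    Fin (n + 1) → k :=
  fun j => ∑ i ∈ Finset.Iic j,
    t ^ ((j : ℕ) - (i : ℕ)) / (((j : ℕ) - (i : ℕ)).factorial : k) * z i

/-!
Identify `z` with the truncated power series `∑ z_k s^k`; then `gaAct t` is multiplication by
`exp (t s)` modulo `s^(n+1)`. For `p + q = n` the Padé approximants of `exp` satisfy
`exp w · N_{q,p}(-w) ≡ N_{p,q}(w) mod w^(n+1)`, so substituting `w = s/u` and multiplying by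
`u^N` (`N ≥ p, q`) gives polynomial curves `x(u)`, `y(u)` with `y(u) = u⁻¹ * x(u)` for
`u ≠ 0`. At `u = 0` only the coefficients of `s^N` survive. Taking `N = i` and
`{p, q} = {n - i, i}` yields the limit pairs `(e_i, 0)` and `(0, e_i)` when `2 i > n`, and
`(e_m, (-1)^m e_m)` when `n = 2m`. Since every `gaAct t` is linear these limits form a subspace,
and a polynomial vanishing on the graph vanishes on it by continuity.
-/

open Finset Nat

theorem fwdDiff_iter_choose_eq_zero {p j : ℕ} (hpj : p < j) :
    (fwdDiff 1)^[j] (fun x ↦ (x.choose p : ℤ)) = 0 := by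
  obtain ⟨r, rfl⟩ := Nat.exists_eq_add_of_lt hpj
  have hp := fwdDiff_iter_choose 0 p
  rw [add_zero] at hp
  rw [show p + r + 1 = (r + 1) + p by omega, Function.iterate_add_apply, hp,
    Function.iterate_succ_apply]
  simp only [choose_zero_right, cast_one, fwdDiff_const]
  exact Function.iterate_fixed (fwdDiff_const 1 0) r

theorem sum_alternating_choose_mul_choose {p q j : ℕ} (hj : j ≤ p + q) :
    ∑ k ∈ range (j + 1), (-1 : ℤ) ^ k * j.choose k * (p + q - k).choose p
      = (p + q - j).choose q := by
  have hsum : ∑ k ∈ range (j + 1), (-1 : ℤ) ^ k * j.choose k * (p + q - k).choose p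
      = (fwdDiff 1)^[j] (fun x ↦ (x.choose p : ℤ)) (p + q - j) := by
    rw [fwdDiff_iter_eq_sum_shift, ← sum_range_reflect]
    refine sum_congr rfl fun k hk ↦ ?_
    have hkj : k ≤ j := Nat.lt_succ_iff.mp (mem_range.mp hk)
    rw [Nat.add_sub_cancel, Nat.choose_symm hkj, smul_eq_mul, smul_eq_mul,
      mul_one, show p + q - (j - k) = p + q - j + k by omega]
  rw [hsum]
  rcases le_or_gt j p with hjp | hpj
  · have := congrFun (fwdDiff_iter_choose (p - j) j) (p + q - j)
    rw [Nat.add_sub_cancel' hjp] at this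
    rw [this, Nat.choose_symm_of_eq_add (show p + q - j = (p - j) + q by omega)]
  · rw [fwdDiff_iter_choose_eq_zero hpj, Nat.choose_eq_zero_of_lt (by omega)]
    simp

theorem Fin.sum_Iic_eq_sum_range {M : Type*} [AddCommMonoid M] {n : ℕ} (j : Fin (n + 1))
    (f : ℕ → M) : ∑ i ∈ Iic j, f i = ∑ k ∈ range (j + 1), f k := by
  rw [Nat.range_succ_eq_Iic, ← Fin.map_valEmbedding_Iic, sum_map]
  rfl

section Field

variable {K : Type*} [Field K] {n : ℕ}

/-- The `k`-th coefficient of the numerator `N_{p,q}` of the `[p/q]` Padé approximant of `exp`,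
scaled by `(p + q).choose p`. -/
def padeCoeff (K : Type*) [Field K] (p q k : ℕ) : K := ((p + q - k).choose q : K) / k !

theorem padeCoeff_self (p q : ℕ) : padeCoeff K p q p = (p ! : K)⁻¹ := by
  rw [padeCoeff, Nat.add_sub_cancel_left, choose_self, cast_one, one_div]

theorem padeCoeff_eq_zero_of_lt {p q k : ℕ} (h : p < k) (hk : k ≤ p + q) :
    padeCoeff K p q k = 0 := by
  rw [padeCoeff, Nat.choose_eq_zero_of_lt (by omega), cast_zero, zero_div]

/-- The Padé property `exp w · N_{q,p}(-w) ≡ N_{p,q}(w) mod w^(p+q+1)`. -/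
theorem gaAct_one_padeCoeff [CharZero K] {p q : ℕ} (h : p + q = n) :
    gaAct K n 1 (fun k : Fin (n + 1) ↦ (-1) ^ (k : ℕ) * padeCoeff K q p k) =
      fun j : Fin (n + 1) ↦ padeCoeff K p q j := by
  funext j
  have hj : (j : ℕ) ≤ p + q := by have := j.isLt; omega
  have hterm : ∀ k ∈ range (j + 1), (1 : K) ^ ((j : ℕ) - k) / ((j : ℕ) - k)! *
      ((-1) ^ k * padeCoeff K q p k) =
      (((-1 : ℤ) ^ k * (j : ℕ).choose k * (p + q - k).choose p : ℤ) : K) / (j : ℕ)! := by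
    intro k hk
    have hkj : k ≤ j := Nat.lt_succ_iff.mp (mem_range.mp hk)
    rw [padeCoeff, add_comm q p]
    push_cast
    rw [cast_choose K hkj, one_pow]
    have : ((j : ℕ)! : K) ≠ 0 := Nat.cast_ne_zero.mpr (factorial_ne_zero j)
    field_simp
  rw [gaAct, Fin.sum_Iic_eq_sum_range j (fun k ↦ (1 : K) ^ ((j : ℕ) - k) / ((j : ℕ) - k)! *
      ((-1) ^ k * padeCoeff K q p k)), sum_congr rfl hterm, ← sum_div, ← Int.cast_sum,
    sum_alternating_choose_mul_choose hj, padeCoeff, Int.cast_natCast]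

theorem gaAct_add (t : K) (x y : Fin (n + 1) → K) :
    gaAct K n t (x + y) = gaAct K n t x + gaAct K n t y := by
  funext j
  simp only [gaAct, Pi.add_apply, mul_add, sum_add_distrib]

theorem gaAct_smul (t c : K) (x : Fin (n + 1) → K) :
    gaAct K n t (c • x) = c • gaAct K n t x := by
  funext j
  simp only [gaAct, Pi.smul_apply, smul_eq_mul, mul_sum]
  exact sum_congr rfl fun i _ ↦ by ring

theorem gaAct_zero (t : K) : gaAct K n t 0 = 0 := by
  simpa using gaAct_smul t 0 0

theorem gaAct_mul_pow_mul (s t : K) (z : Fin (n + 1) → K) :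
    gaAct K n (s * t) (fun k : Fin (n + 1) ↦ s ^ (k : ℕ) * z k) =
      fun j : Fin (n + 1) ↦ s ^ (j : ℕ) * gaAct K n t z j := by
  funext j
  simp only [gaAct, mul_sum]
  refine sum_congr rfl fun i hi ↦ ?_
  have hij : (i : ℕ) ≤ j := Fin.le_iff_val_le_val.mp (mem_Iic.mp hi)
  rw [mul_pow, ← pow_sub_mul_pow s hij]
  ring

/-- The curve `u ↦ u^N · c(s/u)` in coefficient form. -/
def homogenize (N : ℕ) (c : Fin (n + 1) → K) (u : K) : Fin (n + 1) → K :=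
  fun k ↦ c k * u ^ (N - k)

variable {N : ℕ} {c d : Fin (n + 1) → K}

theorem homogenize_eq_smul {u : K} (hu : u ≠ 0) (hc : ∀ k : Fin (n + 1), N < k → c k = 0) :
    homogenize N c u = u ^ N • fun k : Fin (n + 1) ↦ u⁻¹ ^ (k : ℕ) * c k := by
  funext k
  rcases le_or_gt (k : ℕ) N with hk | hk
  · simp only [homogenize, Pi.smul_apply, smul_eq_mul, pow_sub₀ u hu hk, inv_pow]
    ring
  · simp [homogenize, hc k hk]

theorem homogenize_zero (hc : ∀ k : Fin (n + 1), N < k → c k = 0) :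
    homogenize N c 0 = fun k : Fin (n + 1) ↦ if (k : ℕ) = N then c k else 0 := by
  funext k
  rcases lt_trichotomy (k : ℕ) N with hk | hk | hk
  · simp [homogenize, hk.ne, Nat.sub_ne_zero_of_lt hk]
  · simp [homogenize, hk]
  · simp [homogenize, hk.ne', hc k hk]

theorem gaAct_inv_homogenize {u : K} (hu : u ≠ 0) (hc : ∀ k : Fin (n + 1), N < k → c k = 0)
    (hd : ∀ k : Fin (n + 1), N < k → d k = 0) (hcd : gaAct K n 1 c = d) :
    gaAct K n u⁻¹ (homogenize N c u) = homogenize N d u := by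
  rw [homogenize_eq_smul hu hc, homogenize_eq_smul hu hd, gaAct_smul, ← hcd,
    ← gaAct_mul_pow_mul, mul_one]

end Field

theorem continuous_homogenize {K : Type*} [Field K] [TopologicalSpace K] [IsTopologicalRing K]
    {n N : ℕ} (c : Fin (n + 1) → K) : Continuous (homogenize N c) := by
  unfold homogenize
  fun_prop

section Limits

variable (K : Type*) [NontriviallyNormedField K] (n : ℕ)

/-- Limits as `u → 0` of graph points `(x u, u⁻¹ * x u)` along continuous curves; a subspace
because each `gaAct K n t` is linear. -/
def graphLimits : Submodule K ((Fin (n + 1) → K) × (Fin (n + 1) → K)) where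
  carrier := {v | ∃ x y : K → Fin (n + 1) → K, Continuous x ∧ Continuous y ∧
    x 0 = v.1 ∧ y 0 = v.2 ∧ ∀ u ≠ 0, gaAct K n u⁻¹ (x u) = y u}
  add_mem' := by
    rintro ⟨_, _⟩ ⟨_, _⟩ ⟨x, y, hx, hy, rfl, rfl, hxy⟩
      ⟨x', y', hx', hy', rfl, rfl, hxy'⟩
    exact ⟨x + x', y + y', hx.add hx', hy.add hy', rfl, rfl,
      fun u hu ↦ by simp only [Pi.add_apply, gaAct_add, hxy u hu, hxy' u hu]⟩
  zero_mem' := ⟨0, 0, continuous_const, continuous_const, rfl, rfl, fun _ _ ↦ gaAct_zero _⟩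
  smul_mem' := by
    rintro c ⟨_, _⟩ ⟨x, y, hx, hy, rfl, rfl, hxy⟩
    exact ⟨c • x, c • y, hx.const_smul c, hy.const_smul c, rfl, rfl,
      fun u hu ↦ by simp only [Pi.smul_apply, gaAct_smul, hxy u hu]⟩

variable {K n}

theorem eval_eq_zero_of_mem_graphLimits {P : MvPolynomial (Fin (n + 1) ⊕ Fin (n + 1)) K}
    (hP : ∀ (x : Fin (n + 1) → K) (t : K), MvPolynomial.eval (Sum.elim x (gaAct K n t x)) P = 0)
    {a b : Fin (n + 1) → K} (hab : (a, b) ∈ graphLimits K n) :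
    MvPolynomial.eval (Sum.elim a b) P = 0 := by
  obtain ⟨x, y, hx, hy, rfl, rfl, hxy⟩ := hab
  have hcont : Continuous fun u ↦ MvPolynomial.eval (Sum.elim (x u) (y u)) P :=
    (MvPolynomial.continuous_eval P).comp <| continuous_pi fun s ↦ by
      cases s
      exacts [(continuous_apply _).comp hx, (continuous_apply _).comp hy]
  have hzero := Continuous.ext_on (dense_compl_singleton 0) hcont continuous_const
    fun u hu ↦ by simpa only [← hxy u hu] using hP (x u) u⁻¹
  exact congrFun hzero 0

variable [CharZero K]

theorem single_padeCoeff_mem_graphLimits {p q : ℕ} (h : p + q = n) (i : Fin (n + 1))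
    (hp : p ≤ i) (hq : q ≤ i) (c : K) :
    (Pi.single i (c * ((-1) ^ (i : ℕ) * padeCoeff K q p i)),
      Pi.single i (c * padeCoeff K p q i)) ∈ graphLimits K n := by
  have hc : ∀ k : Fin (n + 1), (i : ℕ) < k → (-1) ^ (k : ℕ) * padeCoeff K q p k = 0 :=
    fun k hk ↦ by rw [padeCoeff_eq_zero_of_lt (by omega) (by omega), mul_zero]
  have hd : ∀ k : Fin (n + 1), (i : ℕ) < k → padeCoeff K p q k = 0 :=
    fun k hk ↦ padeCoeff_eq_zero_of_lt (by omega) (by omega)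
  have hmem : (homogenize i (fun k : Fin (n + 1) ↦ (-1) ^ (k : ℕ) * padeCoeff K q p k) 0,
      homogenize i (fun k : Fin (n + 1) ↦ padeCoeff K p q k) 0) ∈ graphLimits K n :=
    ⟨_, _, continuous_homogenize _, continuous_homogenize _, rfl, rfl,
      fun u hu ↦ gaAct_inv_homogenize hu hc hd (gaAct_one_padeCoeff h)⟩
  convert (graphLimits K n).smul_mem c hmem using 1
  simp only [homogenize_zero hc, homogenize_zero hd, Fin.val_inj, Prod.smul_mk]
  ext k <;> by_cases hk : k = i <;> simp [hk]

theorem mk_single_zero_mem_graphLimits {i : Fin (n + 1)} (hi : n < 2 * i) (x : K) :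
    (Pi.single i x, 0) ∈ graphLimits K n := by
  have : ((i : ℕ)! : K) ≠ 0 := Nat.cast_ne_zero.mpr (factorial_ne_zero i)
  convert single_padeCoeff_mem_graphLimits (p := n - i) (q := i) (by omega) i (by omega) le_rfl
    ((-1) ^ (i : ℕ) * (i : ℕ)! * x) using 3
  · rw [padeCoeff_self]
    field_simp
    simp [← pow_mul, pow_mul']
  · rw [padeCoeff_eq_zero_of_lt (by omega) (by omega), mul_zero, Pi.single_zero]

theorem zero_mk_single_mem_graphLimits {i : Fin (n + 1)} (hi : n < 2 * i) (y : K) :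
    (0, Pi.single i y) ∈ graphLimits K n := by
  have : ((i : ℕ)! : K) ≠ 0 := Nat.cast_ne_zero.mpr (factorial_ne_zero i)
  convert single_padeCoeff_mem_graphLimits (p := i) (q := n - i) (by omega) i le_rfl (by omega)
    ((i : ℕ)! * y) using 3
  · rw [padeCoeff_eq_zero_of_lt (by omega) (by omega), mul_zero, mul_zero, Pi.single_zero]
  · rw [padeCoeff_self]
    field_simp

theorem mk_single_neg_one_pow_mem_graphLimits {i : Fin (n + 1)} (hi : n = 2 * i) (x : K) :
    (Pi.single i x, Pi.single i ((-1) ^ (i : ℕ) * x)) ∈ graphLimits K n := by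
  have : ((i : ℕ)! : K) ≠ 0 := Nat.cast_ne_zero.mpr (factorial_ne_zero i)
  convert single_padeCoeff_mem_graphLimits (p := i) (q := i) (by omega) i le_rfl le_rfl
    ((-1) ^ (i : ℕ) * (i : ℕ)! * x) using 3
  · rw [padeCoeff_self]
    field_simp
    simp [← pow_mul, pow_mul']
  · rw [padeCoeff_self]
    field_simp

end Limits

/-- Let `n = 2m`. If the first `m` coordinates of `a` and `b` vanish and
`b_m = (-1)^m a_m`, then `(a,b)` lies in the Zariski closure of the graph
`Γ = {(x, t*x)}` of the basic `G_a`-action on `ℂ^{n+1}`: every polynomial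
vanishing identically on `Γ` vanishes at `(a,b)`. -/
theorem pair_in_graph_closure (m : ℕ) (a b : Fin (2 * m + 1) → ℂ)
    (ha : ∀ i : Fin (2 * m + 1), (i : ℕ) < m → a i = 0)
    (hb : ∀ i : Fin (2 * m + 1), (i : ℕ) < m → b i = 0)
    (hbm : b ⟨m, by omega⟩ = (-1 : ℂ) ^ m * a ⟨m, by omega⟩) :
    ∀ P : MvPolynomial (Fin (2 * m + 1) ⊕ Fin (2 * m + 1)) ℂ,
      (∀ (x : Fin (2 * m + 1) → ℂ) (t : ℂ),
        MvPolynomial.eval (Sum.elim x (gaAct ℂ (2 * m) t x)) P = 0) →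
      MvPolynomial.eval (Sum.elim a b) P = 0 := by
  intro P hP
  refine eval_eq_zero_of_mem_graphLimits hP ?_
  have hsum : (a, b) = ∑ i, (Pi.single i (a i), Pi.single i (b i)) := by
    ext <;> simp [Prod.fst_sum, Prod.snd_sum]
  rw [hsum]
  refine Submodule.sum_mem _ fun i _ ↦ ?_
  rcases lt_trichotomy (i : ℕ) m with hi | hi | hi
  · rw [ha i hi, hb i hi, Pi.single_zero]
    exact zero_mem _
  · have hbi : b i = (-1) ^ (i : ℕ) * a i := by
      convert hbm using 3
      exact Fin.ext hi
    rw [hbi]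
    exact mk_single_neg_one_pow_mem_graphLimits (by omega) _
  · simpa using add_mem (mk_single_zero_mem_graphLimits (by omega) (a i))
      (zero_mk_single_mem_graphLimits (by omega) (b i))
end

section
/- Let n = 2m+1 be odd and consider the basic G_a-action on k^{n+1} over a field k of characteristic zero, (t*z)_k = ∑_{i=0}^{k} t^{k-i}/(k-i)! z_i. If a and b both have their first m+1 coordinates equal to zero (coordinates 0 through m), then (a,b) lies in the Zariski closure of the graph Γ = {(x, t*x) : x ∈ k^{n+1}, t ∈ k}. -/
/-!
Conjugating by the scaling `diag(sⁱ)` turns the action of `s⁻¹` into the action of `1`. So if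
the vectors `u j` and `1 * u j` have all entries beyond index `j` equal to zero, the curve
`x(s) = Σⱼ sʲ · diag(s⁻ⁱ) (u j)` and its image `s⁻¹ * x(s)` are polynomial in `s`, and at `s = 0`
they pass through the diagonal pair `(u i i, (1 * u i) i)`. A polynomial vanishing on the graph
vanishes along the curve for `s ≠ 0`, hence at `s = 0`.

For `n = 2m + 1` such families exist with any prescribed diagonal supported on the indices
`m + 1, …, 2m + 1`, because the square matrix `(1 / (m + 1 + i - r)!)` is invertible: a kernel
vector `w` gives the polynomial `Σᵣ wᵣ X(X - 1)⋯(X - r + 1)` of degree `≤ m` with the `m + 1`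
roots `m + 1, …, 2m + 1`.
-/

open Finset Polynomial

theorem MvPolynomial.eval_eq_zero_of_eval_curve_eq_zero {k σ : Type*} [Field k] [Infinite k]
    (P : MvPolynomial σ k) (c : σ → k[X])
    (h : ∀ s ≠ 0, MvPolynomial.eval (fun i => (c i).eval s) P = 0) :
    MvPolynomial.eval (fun i => (c i).eval 0) P = 0 := by
  have heval (s : k) : (MvPolynomial.aeval c P).eval s =
      MvPolynomial.eval (fun i => (c i).eval s) P := by
    rw [← Polynomial.coe_aeval_eq_eval, MvPolynomial.comp_aeval_apply]
    simp only [Polynomial.coe_aeval_eq_eval]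
    rfl
  have hzero : MvPolynomial.aeval c P = 0 := by
    refine eq_zero_of_infinite_isRoot _
      ((Set.infinite_univ.sdiff (Set.finite_singleton 0)).mono ?_)
    rintro s ⟨-, hs⟩
    exact (heval s).trans (h s hs)
  rw [← heval, hzero, Polynomial.eval_zero]

section Curve

variable {k : Type*} [Field k] {n : ℕ}

def gaActLin (k : Type*) [Field k] (n : ℕ) (t : k) :
    (Fin (n + 1) → k) →ₗ[k] (Fin (n + 1) → k) where
  toFun := gaAct k n t
  map_add' x y := by
    ext j
    simp only [gaAct, Pi.add_apply, mul_add, sum_add_distrib]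
  map_smul' c x := by
    ext j
    simp only [gaAct, Pi.smul_apply, smul_eq_mul, RingHom.id_apply, mul_sum]
    exact sum_congr rfl fun _ _ => by ring

@[simp]
theorem gaActLin_apply (t : k) (z : Fin (n + 1) → k) : gaActLin k n t z = gaAct k n t z := rfl

theorem gaAct_single (t c : k) (r j : Fin (n + 1)) :
    gaAct k n t (Pi.single r c) j =
      if r ≤ j then t ^ ((j : ℕ) - r) / (((j : ℕ) - r).factorial : k) * c else 0 := by
  simp [gaAct, Pi.single_apply]

theorem gaAct_weighted (t : k) (y : Fin (n + 1) → k) :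
    gaAct k n t (fun i => t ^ (i : ℕ) * y i) =
      fun j : Fin (n + 1) => t ^ (j : ℕ) * gaAct k n 1 y j := by
  funext j
  simp only [gaAct, one_pow, mul_sum]
  refine sum_congr rfl fun i hi => ?_
  rw [← pow_sub_mul_pow t (Fin.le_def.mp (mem_Iic.mp hi))]
  ring

/-- The curve `s ↦ Σⱼ sʲ · diag(s⁻ⁱ) (f j)`, written without negative powers; the truncated
exponent `j - i` is harmless because `f j i = 0` for `j < i` in all lemmas below. -/
noncomputable def weightedCurve (f : Fin (n + 1) → Fin (n + 1) → k) (i : Fin (n + 1)) : k[X] :=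
  ∑ j, C (f j i) * X ^ ((j : ℕ) - i)

variable {f : Fin (n + 1) → Fin (n + 1) → k}

theorem weightedCurve_eval (hf : ∀ j i, j < i → f j i = 0) {s : k} (hs : s ≠ 0)
    (i : Fin (n + 1)) :
    (weightedCurve f i).eval s = s⁻¹ ^ (i : ℕ) * ∑ j : Fin (n + 1), s ^ (j : ℕ) * f j i := by
  simp only [weightedCurve, eval_finsetSum, eval_mul, eval_C, eval_pow, eval_X, mul_sum]
  refine sum_congr rfl fun j _ => ?_
  rcases lt_or_ge j i with hji | hij
  · simp [hf j i hji]
  · rw [pow_sub₀ s hs (Fin.le_def.mp hij), inv_pow]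
    ring

theorem weightedCurve_eval_zero (hf : ∀ j i, j < i → f j i = 0) (i : Fin (n + 1)) :
    (weightedCurve f i).eval 0 = f i i := by
  simp only [weightedCurve, eval_finsetSum, eval_mul, eval_C, eval_pow, eval_X]
  rw [sum_eq_single i (fun j _ hji => ?_) (by simp), Nat.sub_self, pow_zero, mul_one]
  rcases lt_or_gt_of_ne hji with hlt | hgt
  · rw [hf j i hlt, zero_mul]
  · rw [zero_pow (by omega), mul_zero]

theorem eval_diagonal_eq_zero_of_vanishes_on_graph [Infinite k]
    (P : MvPolynomial (Fin (n + 1) ⊕ Fin (n + 1)) k)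
    (hP : ∀ (x : Fin (n + 1) → k) (t : k), MvPolynomial.eval (Sum.elim x (gaAct k n t x)) P = 0)
    (u : Fin (n + 1) → Fin (n + 1) → k) (hu : ∀ j i, j < i → u j i = 0)
    (hEu : ∀ j i, j < i → gaAct k n 1 (u j) i = 0) :
    MvPolynomial.eval (Sum.elim (fun i => u i i) (fun i => gaAct k n 1 (u i) i)) P = 0 := by
  set c := Sum.elim (weightedCurve u) (weightedCurve fun j => gaAct k n 1 (u j))
  have hgraph (s : k) (hs : s ≠ 0) : MvPolynomial.eval (fun i => (c i).eval s) P = 0 := by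
    set y := ∑ j : Fin (n + 1), s ^ (j : ℕ) • u j
    have hEy : gaAct k n 1 y = ∑ j : Fin (n + 1), s ^ (j : ℕ) • gaAct k n 1 (u j) := by
      simp only [y, ← gaActLin_apply, map_sum, map_smul]
    convert hP (fun i => s⁻¹ ^ (i : ℕ) * y i) s⁻¹ using 3
    rw [gaAct_weighted, hEy]
    ext (i | i) <;>
      simp [c, weightedCurve_eval hu hs, weightedCurve_eval hEu hs, y, Finset.sum_apply]
  convert MvPolynomial.eval_eq_zero_of_eval_curve_eq_zero P c hgraph using 3
  ext (i | i) <;> simp [c, weightedCurve_eval_zero hu, weightedCurve_eval_zero hEu]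

end Curve

theorem linearIndependent_descPochhammer (R : Type*) [CommRing R] [IsDomain R] :
    LinearIndependent R (descPochhammer R) :=
  Polynomial.Sequence.linearIndependent
    ⟨descPochhammer R, fun i => by
      rw [degree_eq_natDegree (monic_descPochhammer R i).ne_zero, descPochhammer_natDegree]⟩

section Interpolation

variable {k : Type*} [Field k] [CharZero k]

variable (k) in
noncomputable def invFactorialMatrix (N m : ℕ) : Matrix (Fin (m + 1)) (Fin (m + 1)) k :=
  Matrix.of fun i r => (((N + i - r).factorial : ℕ) : k)⁻¹

theorem invFactorialMatrix_det_ne_zero {N m : ℕ} (h : m ≤ N) :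
    (invFactorialMatrix k N m).det ≠ 0 := by
  rw [Ne, ← Matrix.exists_mulVec_eq_zero_iff]
  rintro ⟨w, hw0, hw⟩
  set p : k[X] := ∑ r, w r • descPochhammer k r
  have hdeg : p.natDegree < Fintype.card (Fin (m + 1)) := by
    refine Nat.lt_succ_of_le (natDegree_sum_le_of_forall_le _ _ fun r _ => ?_) |>.trans_eq
      (Fintype.card_fin _).symm
    exact (natDegree_smul_le _ _).trans
      ((descPochhammer_natDegree k r).trans_le (Nat.le_of_lt_succ r.2))
  -- `p (N + i) = (N + i)! · (A w)ᵢ`, since `n.descFactorial r = n! / (n - r)!`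
  have hroot (i : Fin (m + 1)) : p.eval ((N + i : ℕ) : k) = 0 := by
    have hi := congrFun hw i
    simp only [Matrix.mulVec, dotProduct, invFactorialMatrix, Matrix.of_apply, Pi.zero_apply]
      at hi
    simp only [p, eval_finsetSum, eval_smul, descPochhammer_eval_eq_descFactorial, smul_eq_mul]
    rw [← mul_zero ((N + i).factorial : k), ← hi, mul_sum]
    refine sum_congr rfl fun r _ => ?_
    have hfac : ((N + i - r).factorial : k) ≠ 0 := Nat.cast_ne_zero.mpr (Nat.factorial_ne_zero _)
    rw [← Nat.factorial_mul_descFactorial (show (r : ℕ) ≤ N + i by omega), Nat.cast_mul]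
    field_simp
  have hp : p = 0 := eq_zero_of_natDegree_lt_card_of_eval_eq_zero p
    (fun i j hij => Fin.ext (by simpa using hij)) hroot hdeg
  exact hw0 (funext (Fintype.linearIndependent_iff.mp
    ((linearIndependent_descPochhammer k).comp _ Fin.val_injective) w hp))

theorem exists_lower_solution (m : ℕ) (c : Fin (2 * m + 1 + 1) → k) :
    ∃ v : Fin (2 * m + 1 + 1) → k, (∀ i : Fin (2 * m + 1 + 1), m < (i : ℕ) → v i = 0) ∧
      ∀ i : Fin (2 * m + 1 + 1), m < (i : ℕ) → gaAct k (2 * m + 1) 1 v i = c i := by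
  have hA : IsUnit (invFactorialMatrix k (m + 1) m) :=
    (Matrix.isUnit_iff_isUnit_det _).mpr (invFactorialMatrix_det_ne_zero m.le_succ).isUnit
  obtain ⟨w, hw⟩ := Matrix.mulVec_surjective_iff_isUnit.mpr hA
    fun i : Fin (m + 1) => c ⟨m + 1 + i, by omega⟩
  refine ⟨∑ r : Fin (m + 1), Pi.single ⟨r, by omega⟩ (w r), fun i hi => ?_, fun i hi => ?_⟩
  · simp only [Finset.sum_apply, Pi.single_apply, Fin.ext_iff]
    exact sum_eq_zero fun r _ => if_neg (by omega)
  · obtain ⟨i, hi2⟩ := i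
    dsimp only at hi
    obtain ⟨d, rfl⟩ : ∃ d, i = m + 1 + d := ⟨i - (m + 1), by omega⟩
    rw [← gaActLin_apply, map_sum, show c _ = _ from (congrFun hw ⟨d, by omega⟩).symm]
    simp only [Finset.sum_apply, gaActLin_apply, gaAct_single, Matrix.mulVec, dotProduct,
      invFactorialMatrix, Matrix.of_apply]
    refine sum_congr rfl fun r _ => ?_
    rw [if_pos (Fin.mk_le_mk.mpr (by omega)), one_pow, one_div]

theorem exists_triangular_family_with_diagonal (m : ℕ) (a b : Fin (2 * m + 1 + 1) → k)
    (ha : ∀ i : Fin (2 * m + 1 + 1), (i : ℕ) ≤ m → a i = 0)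
    (hb : ∀ i : Fin (2 * m + 1 + 1), (i : ℕ) ≤ m → b i = 0) :
    ∃ u : Fin (2 * m + 1 + 1) → Fin (2 * m + 1 + 1) → k,
      (∀ j i, j < i → u j i = 0) ∧ (∀ j i, j < i → gaAct k (2 * m + 1) 1 (u j) i = 0) ∧
      (fun i => u i i) = a ∧ (fun i => gaAct k (2 * m + 1) 1 (u i) i) = b := by
  choose v hv_low hv_sol using fun j => exists_lower_solution m
    (Pi.single j (b j) - gaAct k (2 * m + 1) 1 (Pi.single j (a j)))
  have hE (j i : Fin (2 * m + 1 + 1)) (hi : m < (i : ℕ)) :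
      gaAct k (2 * m + 1) 1 (Pi.single j (a j) + v j) i =
        Pi.single (M := fun _ => k) j (b j) i := by
    rw [← gaActLin_apply, map_add, Pi.add_apply, gaActLin_apply, gaActLin_apply,
      hv_sol j i hi, Pi.sub_apply, add_sub_cancel]
  have hE0 (i : Fin (2 * m + 1 + 1)) : gaAct k (2 * m + 1) 1 0 i = 0 := by
    rw [← gaActLin_apply, map_zero, Pi.zero_apply]
  refine ⟨fun j => if (j : ℕ) ≤ m then 0 else Pi.single j (a j) + v j, fun j i hji => ?_,
    fun j i hji => ?_, funext fun j => ?_, funext fun j => ?_⟩ <;> dsimp only <;> split_ifs with hj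
  · rfl
  · rw [Pi.add_apply, Pi.single_eq_of_ne hji.ne', hv_low j i (by omega), add_zero]
  · exact hE0 i
  · rw [hE j i (by omega), Pi.single_eq_of_ne hji.ne']
  · exact (ha j hj).symm
  · rw [Pi.add_apply, Pi.single_eq_same, hv_low j j (by omega), add_zero]
  · rw [hE0, hb j hj]
  · rw [hE j j (by omega), Pi.single_eq_same]

end Interpolation

/-- Let `n = 2m+1` be odd. If the coordinates `0,…,m` of `a` and of `b` vanish, then
`(a,b)` lies in the Zariski closure of the graph `Γ = {(x, t*x)}` of the basic
`G_a`-action on `k^{n+1}`: every polynomial vanishing on `Γ` vanishes at `(a,b)`. -/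
theorem pair_in_graph_closure_odd (k : Type*) [Field k] [CharZero k] (m : ℕ)
    (a b : Fin (2 * m + 1 + 1) → k)
    (ha : ∀ i : Fin (2 * m + 1 + 1), (i : ℕ) ≤ m → a i = 0)
    (hb : ∀ i : Fin (2 * m + 1 + 1), (i : ℕ) ≤ m → b i = 0) :
    ∀ P : MvPolynomial (Fin (2 * m + 1 + 1) ⊕ Fin (2 * m + 1 + 1)) k,
      (∀ (x : Fin (2 * m + 1 + 1) → k) (t : k),
        MvPolynomial.eval (Sum.elim x (gaAct k (2 * m + 1) t x)) P = 0) →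
      MvPolynomial.eval (Sum.elim a b) P = 0 := by
  intro P hP
  obtain ⟨u, hu, hEu, rfl, rfl⟩ := exists_triangular_family_with_diagonal m a b ha hb
  exact eval_diagonal_eq_zero_of_vanishes_on_graph P hP u hu hEu
end

section
/- Let D be a locally nilpotent derivation on the coordinate ring k[X] of an irreducible affine variety X over an algebraically closed field k of characteristic zero, inducing a G_a-action on X. Suppose s ∈ k[X] is a local slice, i.e., Ds ≠ 0 and D²s = 0, and suppose x, y ∈ X satisfy f(x) = f(y) for all f ∈ ker D, and Ds(x) ≠ 0. Then x and y lie in the same G_a-orbit. -/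
/-!
Since `D (D s) = 0`, the slice `s` generates `R` over `ker D` after inverting `D s`: every `f`
satisfies `(D s) ^ m * f = p(s)` for a polynomial `p` with coefficients in `ker D`. The orbit
point `exp (t D) · x` with `t = (y s - x s) / x (D s)` agrees with `x`, hence with `y`, on
`ker D`, and takes the value `y s` at `s`. Evaluating `(D s) ^ m * f = p(s)` at both points and
cancelling `x (D s) ^ m ≠ 0` shows that this orbit point is `y`.
-/

open Polynomial Function

namespace Derivation

section Iterate

variable {k R : Type*} [CommRing k] [CommRing R] [Algebra k R] (D : Derivation k R R)

theorem iterate_eq_zero_of_le {f : R} {N i : ℕ} (hN : (⇑D)^[N] f = 0) (hi : N ≤ i) :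
    (⇑D)^[i] f = 0 := by
  obtain ⟨j, rfl⟩ := Nat.exists_eq_add_of_le hi
  rw [add_comm, iterate_add_apply, hN, iterate_map_zero]

theorem iterate_mul_of_map_eq_zero {c : R} (hc : D c = 0) (n : ℕ) (g : R) :
    (⇑D)^[n] (c * g) = c * (⇑D)^[n] g := by
  induction n with
  | zero => rfl
  | succ n ih =>
    rw [iterate_succ_apply', iterate_succ_apply', ih, leibniz, hc, smul_zero, add_zero,
      smul_eq_mul]

theorem map_pow_eq_zero {c : R} (hc : D c = 0) (n : ℕ) : D (c ^ n) = 0 := by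
  rw [leibniz_pow, hc, smul_zero, smul_zero]

theorem iterate_pow_of_map_map_eq_zero {s : R} (hs : D (D s) = 0) (i n : ℕ) :
    (⇑D)^[i] (s ^ n) = n.descFactorial i • (D s ^ i * s ^ (n - i)) := by
  induction i generalizing n with
  | zero => simp
  | succ i ih =>
    cases n with
    | zero => simp [iterate_succ_apply, iterate_map_zero]
    | succ n =>
      rw [iterate_succ_apply, leibniz_pow, Nat.add_sub_cancel, smul_eq_mul, mul_comm,
        iterate_map_nsmul, iterate_mul_of_map_eq_zero D hs, ih, Nat.succ_descFactorial_succ,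
        Nat.add_sub_add_right, mul_smul_comm, smul_smul, pow_succ', mul_assoc]

end Iterate

section Slice

variable {k R : Type*} [Field k] [CharZero k] [CommRing R] [Algebra k R] (D : Derivation k R R)

theorem exists_pow_mul_eq_eval_of_iterate_eq_zero {s : R} (hs : D (D s) = 0) {n : ℕ} {f : R}
    (hf : (⇑D)^[n] f = 0) :
    ∃ (m : ℕ) (p : R[X]), (∀ i, D (p.coeff i) = 0) ∧ D s ^ m * f = p.eval s := by
  induction n generalizing f with
  | zero => exact ⟨0, 0, by simp, by simpa using hf⟩
  | succ n ih =>
    -- `c * s ^ n` has the same top derivative `D^[n]` as `D s ^ n * f`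
    set c : R := (n.factorial : k)⁻¹ • (⇑D)^[n] f
    have hc : D c = 0 := by rw [map_smul, ← iterate_succ_apply' (⇑D), hf, smul_zero]
    have hg : (⇑D)^[n] (D s ^ n * f - c * s ^ n) = 0 := by
      rw [iterate_map_sub, iterate_mul_of_map_eq_zero D (map_pow_eq_zero D hs n),
        iterate_mul_of_map_eq_zero D hc, iterate_pow_of_map_map_eq_zero D hs,
        Nat.descFactorial_self, Nat.sub_self, pow_zero, mul_one, ← Nat.cast_smul_eq_nsmul k,
        smul_mul_smul_comm, inv_mul_cancel₀ (by exact_mod_cast n.factorial_ne_zero), one_smul,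
        mul_comm, sub_self]
    obtain ⟨m, p, hp, hmp⟩ := ih hg
    refine ⟨m + n, p + C (D s ^ m * c) * X ^ n, fun i => ?_, ?_⟩
    · rw [coeff_add, coeff_C_mul_X_pow, map_add, hp, zero_add]
      split_ifs
      · rw [leibniz, hc, map_pow_eq_zero D hs, smul_zero, smul_zero, add_zero]
      · exact map_zero D
    · rw [eval_add, ← hmp, eval_mul, eval_C, eval_pow, eval_X]
      ring

end Slice

section Orbit

variable {k R : Type*} [Field k] [CommRing R] [Algebra k R] {D : Derivation k R R}
  (hD : ∀ f : R, ∃ N : ℕ, (⇑D)^[N] f = 0) (x : R →ₐ[k] k) (t : k)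

theorem support_orbit_subset {f : R} {N : ℕ} (hN : (⇑D)^[N] f = 0) :
    support (fun i : ℕ => t ^ i / (i.factorial : k) * x ((⇑D)^[i] f)) ⊆ Finset.range N := by
  intro i hi
  by_contra hiN
  exact hi (by
    dsimp only
    rw [D.iterate_eq_zero_of_le hN (by simpa using hiN), map_zero, mul_zero])

/-- The orbit point `exp (t D) · x`, seen as the functional `f ↦ x (exp (t D) f)`. -/
noncomputable def orbitMap : R →+ k where
  toFun f := ∑ᶠ i : ℕ, t ^ i / (i.factorial : k) * x ((⇑D)^[i] f)
  map_zero' := by simp only [iterate_map_zero, map_zero, mul_zero, finsum_zero]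
  map_add' f g := by
    obtain ⟨M, hM⟩ := hD f
    obtain ⟨N, hN⟩ := hD g
    simp only [iterate_map_add, map_add, mul_add]
    exact finsum_add_distrib ((Finset.range M).finite_toSet.subset (support_orbit_subset x t hM))
      ((Finset.range N).finite_toSet.subset (support_orbit_subset x t hN))

theorem orbitMap_apply_eq_sum {f : R} {N : ℕ} (hN : (⇑D)^[N] f = 0) :
    orbitMap hD x t f = ∑ i ∈ Finset.range N, t ^ i / (i.factorial : k) * x ((⇑D)^[i] f) :=
  finsum_eq_finsetSum_of_support_subset _ (support_orbit_subset x t hN)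

theorem orbitMap_mul_of_map_eq_zero {c : R} (hc : D c = 0) (g : R) :
    orbitMap hD x t (c * g) = x c * orbitMap hD x t g := by
  simp only [orbitMap, AddMonoidHom.coe_mk, ZeroHom.coe_mk, D.iterate_mul_of_map_eq_zero hc,
    map_mul, mul_left_comm _ (x c), mul_finsum]

theorem orbitMap_pow_of_map_map_eq_zero [CharZero k] {s : R} (hs : D (D s) = 0) (n : ℕ) :
    orbitMap hD x t (s ^ n) = (t * x (D s) + x s) ^ n := by
  have hn : (⇑D)^[n + 1] (s ^ n) = 0 := by
    rw [D.iterate_pow_of_map_map_eq_zero hs, Nat.descFactorial_of_lt (Nat.lt_succ_self n),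
      zero_smul]
  rw [orbitMap_apply_eq_sum hD x t hn, add_pow]
  refine Finset.sum_congr rfl fun i _ => ?_
  rw [D.iterate_pow_of_map_map_eq_zero hs, map_nsmul, map_mul, map_pow, map_pow,
    Nat.descFactorial_eq_factorial_mul_choose, nsmul_eq_mul, Nat.cast_mul]
  field_simp [Nat.cast_ne_zero.mpr i.factorial_ne_zero]
  ring

theorem orbitMap_eval [CharZero k] {s : R} (hs : D (D s) = 0) {p : R[X]}
    (hp : ∀ i, D (p.coeff i) = 0) :
    orbitMap hD x t (p.eval s) = p.eval₂ (x : R →+* k) (t * x (D s) + x s) := by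
  rw [eval_eq_sum_range, map_sum, eval₂_eq_sum_range]
  refine Finset.sum_congr rfl fun i _ => ?_
  rw [orbitMap_mul_of_map_eq_zero hD x t (hp i), orbitMap_pow_of_map_map_eq_zero hD x t hs]
  rfl

end Orbit

end Derivation

theorem local_slice_orbit_separation_general (k : Type*) [Field k] [CharZero k]
    (R : Type*) [CommRing R] [Algebra k R]
    (D : Derivation k R R)
    (hln : ∀ f : R, ∃ N : ℕ, (⇑D)^[N] f = 0)
    (s : R) (hs2 : D (D s) = 0)
    (x y : R →ₐ[k] k)
    (hsep : ∀ f : R, D f = 0 → x f = y f)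
    (hx : x (D s) ≠ 0) :
    ∃ t : k, ∀ f : R,
      y f = ∑ᶠ i : ℕ, t ^ i / (i.factorial : k) * x ((⇑D)^[i] f) := by
  set t := (y s - x s) / x (D s)
  have hys : t * x (D s) + x s = y s := by rw [div_mul_cancel₀ _ hx, sub_add_cancel]
  refine ⟨t, fun f => ?_⟩
  obtain ⟨N, hN⟩ := hln f
  obtain ⟨m, p, hp, hf⟩ := D.exists_pow_mul_eq_eval_of_iterate_eq_zero hs2 hN
  have hxy : p.eval₂ (x : R →+* k) (y s) = p.eval₂ (y : R →+* k) (y s) := by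
    simp only [eval₂_eq_sum_range, AlgHom.coe_toRingHom, hsep _ (hp _)]
  have key : x (D s) ^ m * Derivation.orbitMap hln x t f = x (D s) ^ m * y f :=
    calc x (D s) ^ m * Derivation.orbitMap hln x t f
        = Derivation.orbitMap hln x t (D s ^ m * f) := by
          rw [Derivation.orbitMap_mul_of_map_eq_zero hln x t (D.map_pow_eq_zero hs2 m), map_pow]
      _ = y (D s ^ m * f) := by
          rw [hf, Derivation.orbitMap_eval hln x t hs2 hp, hys, hxy]
          exact eval₂_hom (y : R →+* k) s
      _ = x (D s) ^ m * y f := by rw [map_mul, map_pow, hsep _ hs2]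
  exact (mul_left_cancel₀ (pow_ne_zero m hx) key).symm

/-- Proposition 2.1: Let `D` be a locally nilpotent derivation on the coordinate ring
`R = k[X]` of an irreducible affine variety `X` (`R` an integral domain, finitely
generated over `k` algebraically closed of characteristic zero), inducing a
`G_a`-action whose orbit map on points (`k`-algebra homomorphisms `R →ₐ[k] k`) is
`(t * x)(f) = ∑ᵢ tⁱ/i! · x(Dⁱ f)`.  If `s` is a local slice (`Ds ≠ 0`, `D²s = 0`),
and `x, y` agree on all invariants (`ker D`) with `(Ds)(x) ≠ 0`, then `x` and `y`
lie in the same orbit. -/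
theorem local_slice_orbit_separation (k : Type*) [Field k] [IsAlgClosed k] [CharZero k]
    (R : Type*) [CommRing R] [IsDomain R] [Algebra k R] [Algebra.FiniteType k R]
    (D : Derivation k R R)
    (hln : ∀ f : R, ∃ N : ℕ, (⇑D)^[N] f = 0)
    (s : R) (hs1 : D s ≠ 0) (hs2 : D (D s) = 0)
    (x y : R →ₐ[k] k)
    (hsep : ∀ f : R, D f = 0 → x f = y f)
    (hx : x (D s) ≠ 0) :
    ∃ t : k, ∀ f : R,
      y f = ∑ᶠ i : ℕ, t ^ i / (i.factorial : k) * x ((⇑D)^[i] f) :=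
  local_slice_orbit_separation_general k R D hln s hs2 x y hsep hx
end
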